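/- Let T: M → A be an O-operator on a Hom-associative algebra A with respect to the bimodule (M,l,r,φ). Define l_T(u,x) = T(u)·x − T(r(u,x)) and r_T(x,u) = x·T(u) − T(l(x,u)) for x ∈ A, u ∈ M. Then (A, l_T, r_T, α) is a bimodule over the Hom-associative algebra (M, ⋆_T, φ), where u ⋆_T v = r(u,T(v)) + l(T(u),v). -/
import Mathlib


section

variable {K A M : Type*} [Field K] [AddCommGroup A] [Module K A]
  [AddCommGroup M] [Module K M]

/-- The induced product `u ⋆_T v = r(u,T(v)) + l(T(u),v)` on `M`. -/
def starT (l : A →ₗ[K] M →ₗ[K] M) (r : M →ₗ[K] A →ₗ[K] M)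
    (T : M →ₗ[K] A) (u v : M) : M :=
  r u (T v) + l (T u) v

/-- `l_T(u,x) = T(u)·x − T(r(u,x))`. -/
def lT (μ : A →ₗ[K] A →ₗ[K] A) (r : M →ₗ[K] A →ₗ[K] M)
    (T : M →ₗ[K] A) (u : M) (x : A) : A :=
  μ (T u) x - T (r u x)

/-- `r_T(x,u) = x·T(u) − T(l(x,u))`. -/
def rT (μ : A →ₗ[K] A →ₗ[K] A) (l : A →ₗ[K] M →ₗ[K] M)
    (T : M →ₗ[K] A) (x : A) (u : M) : A :=
  μ x (T u) - T (l x u)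

/-- for an `𝒪`-operator `T`, the maps `l_T, r_T` make
`(A, l_T, r_T, α)` a bimodule over the Hom-associative algebra `(M, ⋆_T, φ)`. -/
theorem stmt_14 (μ : A →ₗ[K] A →ₗ[K] A) (α : A →ₗ[K] A)
    (l : A →ₗ[K] M →ₗ[K] M) (r : M →ₗ[K] A →ₗ[K] M) (φ : M →ₗ[K] M)
    (hassoc : ∀ a b c : A, μ (α a) (μ b c) = μ (μ a b) (α c))
    (hmult : ∀ a b : A, α (μ a b) = μ (α a) (α b))
    (hb1 : ∀ x v, φ (l x v) = l (α x) (φ v))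
    (hb2 : ∀ v x, φ (r v x) = r (φ v) (α x))
    (hb3 : ∀ x y v, l (μ x y) (φ v) = l (α x) (l y v))
    (hb4 : ∀ v x y, r (φ v) (μ x y) = r (r v x) (α y))
    (hb5 : ∀ x v y, l (α x) (r v y) = r (l x v) (α y))
    (T : M →ₗ[K] A)
    (hTφ : ∀ u, T (φ u) = α (T u))
    (hT : ∀ u v, μ (T u) (T v) = T (l (T u) v + r u (T v))) :
    (∀ (u : M) (x : A), α (lT μ r T u x) = lT μ r T (φ u) (α x)) ∧
    (∀ (x : A) (u : M), α (rT μ l T x u) = rT μ l T (α x) (φ u)) ∧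
    (∀ (u v : M) (x : A),
      lT μ r T (starT l r T u v) (α x) = lT μ r T (φ u) (lT μ r T v x)) ∧
    (∀ (x : A) (u v : M),
      rT μ l T (α x) (starT l r T u v) = rT μ l T (rT μ l T x u) (φ v)) ∧
    (∀ (u : M) (x : A) (v : M),
      lT μ r T (φ u) (rT μ l T x v) = rT μ l T (lT μ r T u x) (φ v)) := by
  have key : ∀ w z : M, μ (T w) (T z) = T (l (T w) z) + T (r w (T z)) := by
    intro w z; rw [hT, map_add]
  have key2 : ∀ w z : M, μ (α (T w)) (T z) = T (l (α (T w)) z) + T (r (φ w) (T z)) := by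
    intro w z; rw [← hTφ, hT, map_add, hTφ]
  have key3 : ∀ z w : M, μ (T z) (α (T w)) = T (l (T z) (φ w)) + T (r z (α (T w))) := by
    intro z w; rw [← hTφ, hT, map_add, hTφ]
  refine ⟨?_, ?_, ?_, ?_, ?_⟩
  · intro u x
    simp only [lT, map_sub, hmult, hTφ]
    rw [← hTφ (r u x), hb2]
  · intro x u
    simp only [rT, map_sub, hmult, hTφ]
    rw [← hTφ (l x u), hb1]
  · intro u v x
    simp only [lT, starT, map_add, map_sub, LinearMap.add_apply, LinearMap.sub_apply]
    rw [hTφ, hassoc, key u v, key2, hb4, hb5]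
    simp only [map_add, LinearMap.add_apply]
    abel
  · intro x u v
    simp only [rT, starT, map_add, map_sub, LinearMap.add_apply, LinearMap.sub_apply]
    rw [hTφ, ← hassoc, key u v, key3, hb3, ← hb5]
    simp only [map_add, LinearMap.add_apply]
    abel
  · intro u x v
    simp only [lT, rT, map_sub, LinearMap.sub_apply]
    rw [hTφ u, hTφ v, hassoc, key2, key3, hb3, hb4]
    abel

end
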